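/- arXiv:2404.01279 — 2 statements merged into one kernel-verified Lean document; each statement's English description precedes it below -/
import Mathlib

section
/- Let K and K' be admissible d-complexes on disjoint finite vertex sets S and S', let K # K' be their connected sum along facets F of K and F' of K' with central vertices the identified pairs, and let α be any integral (d+1)-chain on the vertex set of K # K' with ∂α = K # K' and |α|₁ = V_ℤ(K # K'). Then every oriented (d+1)-simplex appearing in α with nonzero coefficient falls into one of the following cases: entirely on the vertices of K (central vertices included); entirely on the vertices of K' (central vertices included); entirely on the vertices of K (central vertices included) except for exactly one vertex of K' not central; or entirely on the vertices of K' (central vertices included) except for exactly one vertex of K not central. -/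
/-!
Framework: oriented simplicial chains on a finite vertex set.

An oriented `n`-simplex on a vertex set `V` is an `(n+1)`-tuple of distinct vertices
up to even permutation; an odd permutation yields the oppositely oriented simplex.
An `n`-chain with coefficients in `R` is encoded as an *alternating* function
`c : (Fin (n+1) → V) → R`: the value `c f` is the coefficient of the oriented
simplex represented by the tuple `f`, and reversing orientation negates it.
-/

/-- `c` is an `n`-chain: it is alternating under permutations of the tuple
(so an oriented simplex and its orientation reversal are identified up to sign). -/
def IsAltChain {V : Type*} (n : ℕ) {R : Type*} [AddCommGroup R]
    (c : (Fin (n + 1) → V) → R) : Prop :=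
  ∀ (σ : Equiv.Perm (Fin (n + 1))) (f : Fin (n + 1) → V),
    c (f ∘ σ) = (Equiv.Perm.sign σ : ℤ) • c f

/-- The boundary operator: `∂` sends `[v₀,…,vₙ]` to `Σᵢ (−1)ⁱ [v₀,…,v̂ᵢ,…,vₙ]`;
in the alternating-function encoding this is `(∂c) g = Σ_{v} c (v ∷ g)`. -/
def bdry {V : Type*} [Fintype V] {n : ℕ} {R : Type*} [AddCommMonoid R]
    (c : (Fin (n + 1) → V) → R) : (Fin n → V) → R :=
  fun g => ∑ v : V, c (Fin.cons v g)

/-- 1-norm of an integral chain: sum of the absolute values of the coefficients,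
one per oriented simplex (each simplex has `(n+1)!` tuple representatives). -/
noncomputable def normZ {V : Type*} [Fintype V] [DecidableEq V] {n : ℕ}
    (c : (Fin (n + 1) → V) → ℤ) : ℝ :=
  (∑ f : Fin (n + 1) → V, |(c f : ℝ)|) / (Nat.factorial (n + 1) : ℝ)

/-- 1-norm of a rational chain. -/
noncomputable def normQ {V : Type*} [Fintype V] [DecidableEq V] {n : ℕ}
    (c : (Fin (n + 1) → V) → ℚ) : ℝ :=
  (∑ f : Fin (n + 1) → V, |(c f : ℝ)|) / (Nat.factorial (n + 1) : ℝ)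

/-- An admissible `d`-complex on `V`: an integral `d`-chain in which every oriented
`d`-simplex appears with coefficient `0` or `1` (i.e. every tuple has coefficient
`-1`, `0` or `1`), and whose boundary vanishes. Its *facets* are the oriented
simplices (tuples) with coefficient `1`. -/
structure IsAdmissible {V : Type*} [Fintype V] (d : ℕ)
    (K : (Fin (d + 1) → V) → ℤ) : Prop where
  chain : IsAltChain d K
  coeff : ∀ f, K f = -1 ∨ K f = 0 ∨ K f = 1
  closed : ∀ g, bdry K g = 0

/-- `V_ℤ(K)`: the minimum 1-norm of an integral `(d+1)`-chain `α` with `∂α = K`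
(the minimum is attained, so it equals this infimum). -/
noncomputable def VZ {V : Type*} [Fintype V] [DecidableEq V] (d : ℕ)
    (K : (Fin (d + 1) → V) → ℤ) : ℝ :=
  sInf { x : ℝ | ∃ α : (Fin (d + 2) → V) → ℤ,
    IsAltChain (d + 1) α ∧ (∀ g, bdry α g = K g) ∧ x = normZ α }

/-- `V_ℚ(K)`: the minimum 1-norm of a rational `(d+1)`-chain `α` with `∂α = K`
(the minimum is attained, so it equals this infimum). -/
noncomputable def VQ {V : Type*} [Fintype V] [DecidableEq V] (d : ℕ)
    (K : (Fin (d + 1) → V) → ℤ) : ℝ :=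
  sInf { x : ℝ | ∃ α : (Fin (d + 2) → V) → ℚ,
    IsAltChain (d + 1) α ∧ (∀ g, bdry α g = (K g : ℚ)) ∧ x = normQ α }

/-- The unit-flux constraint: for every oriented `(d+1)`-simplex `t` on `V`,
the total flux through its oriented boundary facets is at most `1`. -/
def UnitFlux {V : Type*} (d : ℕ) (φ : (Fin (d + 1) → V) → ℝ) : Prop :=
  ∀ t : Fin (d + 2) → V, Function.Injective t →
    ∑ i : Fin (d + 2), (-1 : ℝ) ^ (i : ℕ) * φ (t ∘ i.succAbove) ≤ 1

/-- `φ(F₁) + ⋯ + φ(Fₙ)`, the sum of a flux function over the facets of `K`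
(each facet has `(d+1)!` tuple representatives `f`, on which `K f * φ f` agree). -/
noncomputable def fluxSum {V : Type*} [Fintype V] (d : ℕ)
    (φ : (Fin (d + 1) → V) → ℝ) (K : (Fin (d + 1) → V) → ℤ) : ℝ :=
  (∑ f : Fin (d + 1) → V, (K f : ℝ) * φ f) / (Nat.factorial (d + 1) : ℝ)

/-- Pushforward of a chain along a map of vertex sets `q : V → W`
(simplices whose image is degenerate die). -/
def pushChain {V W : Type*} [Fintype V] [DecidableEq W] (q : V → W) {n : ℕ}
    {R : Type*} [AddCommMonoid R] (c : (Fin n → V) → R) : (Fin n → W) → R :=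
  fun f => ∑ g : Fin n → V, if q ∘ g = f then c g else 0

/-- The chain consisting of the single oriented simplex `[s 0, …, s n]`. -/
def simplexChain {V : Type*} [DecidableEq V] {n : ℕ} (s : Fin (n + 1) → V) :
    (Fin (n + 1) → V) → ℤ :=
  fun f => ∑ σ : Equiv.Perm (Fin (n + 1)),
    if f = s ∘ σ then (Equiv.Perm.sign σ : ℤ) else 0

/-- The chain of the disjoint union `K ⊔ K'` on `V ⊕ V'`: it is `K + K'`. -/
def unionChain {V V' : Type*} [Fintype V] [Fintype V'] [DecidableEq V] [DecidableEq V']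
    {n : ℕ} (K : (Fin n → V) → ℤ) (K' : (Fin n → V') → ℤ) : (Fin n → V ⊕ V') → ℤ :=
  fun f => pushChain Sum.inl K f + pushChain Sum.inr K' f

/-- The chain of the connected sum `K # K'` on the glued vertex set `W`
(with gluing maps `j : V → W`, `j' : V' → W` identifying the facet `vF` of `K`
with the facet `vF'` of `K'`): the image of `K + K' − F − F'` under the gluing. -/
def connSum {V V' W : Type*} [Fintype V] [Fintype V'] [DecidableEq V] [DecidableEq V']
    [DecidableEq W] {d : ℕ} (K : (Fin (d + 1) → V) → ℤ) (K' : (Fin (d + 1) → V') → ℤ)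
    (vF : Fin (d + 1) → V) (vF' : Fin (d + 1) → V') (j : V → W) (j' : V' → W) :
    (Fin (d + 1) → W) → ℤ :=
  pushChain (Sum.elim j j')
    (fun g : Fin (d + 1) → V ⊕ V' =>
      pushChain Sum.inl K g + pushChain Sum.inr K' g
        - pushChain Sum.inl (simplexChain vF) g - pushChain Sum.inr (simplexChain vF') g)

section Aux

variable {V U W : Type*}

lemma altZero {n : ℕ} {c : (Fin (n + 1) → V) → ℤ} (hc : IsAltChain n c)
    {f : Fin (n + 1) → V} (hf : ¬ Function.Injective f) : c f = 0 := by
  rw [Function.not_injective_iff] at hf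
  obtain ⟨a, b, hab, hne⟩ := hf
  have hfs : f ∘ (Equiv.swap a b) = f := by
    funext i
    simp only [Function.comp_apply, Equiv.swap_apply_def]
    split_ifs with h1 h2
    · exact (h1 ▸ hab.symm)
    · exact (h2 ▸ hab)
    · rfl
  have := hc (Equiv.swap a b) f
  rw [hfs, Equiv.Perm.sign_swap hne] at this
  simp at this
  omega

lemma pushChain_alt [Fintype V] [DecidableEq W] {n : ℕ} (q : V → W)
    {c : (Fin (n + 1) → V) → ℤ} (hc : IsAltChain n c) :
    IsAltChain n (pushChain q c) := by
  intro σ f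
  unfold pushChain
  let e : ((Fin (n+1)) → V) ≃ ((Fin (n+1)) → V) :=
    Equiv.arrowCongr σ.symm (Equiv.refl V)
  have he : ∀ g : Fin (n+1) → V, e g = g ∘ σ := fun g => by
    funext i; simp [e]
  rw [← Equiv.sum_comp e (fun g => if q ∘ g = f ∘ σ then c g else 0)]
  have key : ∀ g : Fin (n+1) → V,
      (if q ∘ (e g) = f ∘ σ then c (e g) else 0)
        = (Equiv.Perm.sign σ : ℤ) • (if q ∘ g = f then c g else 0) := by
    intro g
    rw [he]
    have hcond : (q ∘ (g ∘ σ) = f ∘ σ) ↔ (q ∘ g = f) := by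
      constructor
      · intro h
        funext i
        have := congrFun h (σ.symm i)
        simpa using this
      · intro h
        rw [show q ∘ (g ∘ σ) = (q ∘ g) ∘ σ from rfl, h]
    rw [if_congr hcond rfl rfl]
    split_ifs with h
    · exact hc σ g
    · simp
  rw [Finset.sum_congr rfl (fun g _ => key g), ← Finset.smul_sum]

lemma pushChain_addc [Fintype V] [DecidableEq W] {n : ℕ} (q : V → W)
    (c c' : (Fin n → V) → ℤ) (f : Fin n → W) :
    pushChain q (fun x => c x + c' x) f = pushChain q c f + pushChain q c' f := by
  unfold pushChain
  rw [← Finset.sum_add_distrib]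
  refine Finset.sum_congr rfl fun g _ => ?_
  split_ifs <;> simp

lemma pushChain_subc [Fintype V] [DecidableEq W] {n : ℕ} (q : V → W)
    (c c' : (Fin n → V) → ℤ) (f : Fin n → W) :
    pushChain q (fun x => c x - c' x) f = pushChain q c f - pushChain q c' f := by
  unfold pushChain
  rw [← Finset.sum_sub_distrib]
  refine Finset.sum_congr rfl fun g _ => ?_
  split_ifs <;> simp

end Aux
section Aux2

variable {V U W : Type*}

lemma pushChain_zeroc [Fintype V] [DecidableEq W] {n : ℕ} (q : V → W)
    (f : Fin n → W) : pushChain q (fun _ => (0:ℤ)) f = 0 := by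
  unfold pushChain; simp

lemma bdry_pushChain [Fintype V] [Fintype W] [DecidableEq W] {n : ℕ} (q : V → W)
    (c : (Fin (n + 1) → V) → ℤ) (g : Fin n → W) :
    bdry (pushChain q c) g = pushChain q (bdry c) g := by
  unfold bdry pushChain
  rw [Finset.sum_comm]
  have lhs : ∀ h : Fin (n+1) → V,
      (∑ w : W, if q ∘ h = Fin.cons w g then c h else 0)
        = if q ∘ (h ∘ Fin.succ) = g then c h else 0 := by
    intro h
    have hsplit : ∀ w, (q ∘ h = Fin.cons w g) ↔ (q (h 0) = w ∧ q ∘ (h ∘ Fin.succ) = g) := by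
      intro w
      constructor
      · intro hh
        constructor
        · exact congrFun hh 0
        · funext i; exact congrFun hh i.succ
      · rintro ⟨h1, h2⟩
        funext i
        refine Fin.cases ?_ ?_ i
        · simpa using h1
        · intro i2; simpa using congrFun h2 i2
    calc (∑ w : W, if q ∘ h = Fin.cons w g then c h else 0)
        = ∑ w : W, if q (h 0) = w then (if q ∘ (h ∘ Fin.succ) = g then c h else 0) else 0 := by
          refine Finset.sum_congr rfl fun w _ => ?_
          rw [if_congr (hsplit w) rfl rfl, ite_and]
      _ = if q ∘ (h ∘ Fin.succ) = g then c h else 0 := by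
          rw [Finset.sum_ite_eq]; simp
  rw [Finset.sum_congr rfl (fun h _ => lhs h)]
  have rhs : ∀ g' : Fin n → V,
      (if q ∘ g' = g then (∑ v : V, c (Fin.cons v g')) else 0)
        = ∑ v : V, if q ∘ g' = g then c (Fin.cons v g') else 0 := by
    intro g'; split_ifs <;> simp
  rw [Finset.sum_congr rfl (fun g' _ => rhs g')]
  rw [Finset.sum_comm]
  let e : (V × (Fin n → V)) ≃ (Fin (n+1) → V) := Fin.consEquiv (fun _ => V)
  rw [← Equiv.sum_comp e (fun h => if q ∘ (h ∘ Fin.succ) = g then c h else 0)]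
  rw [Fintype.sum_prod_type]
  refine Finset.sum_congr rfl fun v _ => Finset.sum_congr rfl fun g' _ => ?_
  have h1 : (e (v, g')) = Fin.cons v g' := rfl
  rw [h1]
  have h2 : (Fin.cons v g' : Fin (n+1) → V) ∘ Fin.succ = g' := by
    funext i; simp
  rw [h2]

lemma pushChain_pushChain [Fintype V] [Fintype U] [DecidableEq U] [DecidableEq W]
    (q : V → U) (p : U → W) {n : ℕ} (c : (Fin n → V) → ℤ) (f : Fin n → W) :
    pushChain p (pushChain q c) f = pushChain (p ∘ q) c f := by
  unfold pushChain
  have step : ∀ u : Fin n → U,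
      (if p ∘ u = f then (∑ g : Fin n → V, if q ∘ g = u then c g else 0) else 0)
        = ∑ g : Fin n → V, if q ∘ g = u then (if p ∘ (q ∘ g) = f then c g else 0) else 0 := by
    intro u
    split_ifs with h
    · refine Finset.sum_congr rfl fun g _ => ?_
      split_ifs with h2 h3
      · rfl
      · exact absurd (h2 ▸ h) h3
      · rfl
    · refine (Finset.sum_eq_zero fun g _ => ?_).symm
      split_ifs with h2 h3
      · exact absurd (h2 ▸ h3) h
      · rfl
      · rfl
  rw [Finset.sum_congr rfl (fun u _ => step u), Finset.sum_comm]
  refine Finset.sum_congr rfl fun g _ => ?_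
  rw [Finset.sum_ite_eq]
  simp [Function.comp_assoc]

lemma pushChain_simplexChain [Fintype V] [DecidableEq V] [DecidableEq W] {n : ℕ}
    (q : V → W) (s : Fin (n + 1) → V) (f : Fin (n+1) → W) :
    pushChain q (simplexChain s) f = simplexChain (q ∘ s) f := by
  unfold pushChain simplexChain
  have step : ∀ g : Fin (n+1) → V,
      (if q ∘ g = f then (∑ σ : Equiv.Perm (Fin (n+1)), if g = s ∘ σ then ((Equiv.Perm.sign σ : ℤ)) else 0) else 0)
        = ∑ σ : Equiv.Perm (Fin (n+1)), if g = s ∘ σ then (if q ∘ (s ∘ σ) = f then ((Equiv.Perm.sign σ : ℤ)) else 0) else 0 := by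
    intro g
    split_ifs with h
    · refine Finset.sum_congr rfl fun σ _ => ?_
      split_ifs with h2 h3
      · rfl
      · exact absurd (h2 ▸ h) h3
      · rfl
    · refine (Finset.sum_eq_zero fun σ _ => ?_).symm
      split_ifs with h2 h3
      · exact absurd (h2 ▸ h3) h
      · rfl
      · rfl
  rw [Finset.sum_congr rfl (fun g _ => step g), Finset.sum_comm]
  refine Finset.sum_congr rfl fun σ _ => ?_
  rw [Finset.sum_ite_eq']
  simp [eq_comm, Function.comp_assoc]

lemma simplexChain_comp_perm [DecidableEq V] {n : ℕ} (s : Fin (n + 1) → V)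
    (ρ : Equiv.Perm (Fin (n + 1))) (f : Fin (n+1) → V) :
    simplexChain (s ∘ ρ) f = (Equiv.Perm.sign ρ : ℤ) * simplexChain s f := by
  unfold simplexChain
  rw [Finset.mul_sum]
  let e : Equiv.Perm (Fin (n+1)) ≃ Equiv.Perm (Fin (n+1)) :=
    Equiv.mulLeft ρ⁻¹
  have hsum := Equiv.sum_comp e (fun σ : Equiv.Perm (Fin (n+1)) =>
    if f = (s ∘ ρ) ∘ σ then ((Equiv.Perm.sign σ : ℤ)) else 0)
  rw [← hsum]
  refine Finset.sum_congr rfl fun σ _ => ?_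
  have h1 : (e σ : Equiv.Perm (Fin (n+1))) = ρ⁻¹ * σ := rfl
  rw [h1]
  have h2 : ((s ∘ ρ) ∘ ⇑(ρ⁻¹ * σ)) = s ∘ ⇑σ := by
    funext i
    simp [Equiv.Perm.mul_apply]
  rw [h2]
  have h3 : ((Equiv.Perm.sign (ρ⁻¹ * σ) : ℤ)) = (Equiv.Perm.sign ρ : ℤ) * (Equiv.Perm.sign σ : ℤ) := by
    rw [map_mul]
    push_cast
    rw [Equiv.Perm.sign_inv]
  split_ifs
  · rw [h3]
  · simp

end Aux2
section Aux3

variable {V V' W : Type*}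

lemma connSum_decomp [Fintype V] [Fintype V'] [DecidableEq V] [DecidableEq V']
    [DecidableEq W] {d : ℕ} (K : (Fin (d + 1) → V) → ℤ) (K' : (Fin (d + 1) → V') → ℤ)
    (vF : Fin (d + 1) → V) (vF' : Fin (d + 1) → V') (j : V → W) (j' : V' → W)
    (ρ : Equiv.Perm (Fin (d + 1))) (hρ : Equiv.Perm.sign ρ = -1)
    (hglue : ∀ i, j (vF i) = j' (vF' (ρ i))) (f : Fin (d + 1) → W) :
    connSum K K' vF vF' j j' f = pushChain j K f + pushChain j' K' f := by
  unfold connSum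
  rw [pushChain_subc, pushChain_subc, pushChain_addc,
      pushChain_pushChain, pushChain_pushChain, pushChain_pushChain, pushChain_pushChain,
      Sum.elim_comp_inl, Sum.elim_comp_inr,
      pushChain_simplexChain, pushChain_simplexChain]
  have h1 : j ∘ vF = (j' ∘ vF') ∘ ρ := by funext i; exact hglue i
  rw [h1, simplexChain_comp_perm, hρ]
  simp

lemma cycle_small [Fintype W] [DecidableEq W] {d : ℕ} (c : (Fin (d + 1) → W) → ℤ)
    (hc : IsAltChain d c) (Cs : Fin (d + 1) → W) (hCs : Function.Injective Cs)
    (hsupp : ∀ f, c f ≠ 0 → ∀ i, ∃ i', f i = Cs i')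
    (hclosed : ∀ g, bdry c g = 0) (f : Fin (d + 1) → W) : c f = 0 := by
  classical
  by_contra hne
  have hinj : Function.Injective f := by
    by_contra h; exact hne (altZero hc h)
  have hCfin : (Finset.univ.image f) = (Finset.univ.image Cs) := by
    apply Finset.eq_of_subset_of_card_le
    · intro w hw
      simp only [Finset.mem_image] at hw ⊢
      obtain ⟨i, _, rfl⟩ := hw
      obtain ⟨i', hi'⟩ := hsupp f hne i
      exact ⟨i', Finset.mem_univ _, hi'.symm⟩
    · rw [Finset.card_image_of_injective _ hCs, Finset.card_image_of_injective _ hinj]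
  have hb := hclosed (f ∘ Fin.succ)
  unfold bdry at hb
  have hsingle : (∑ w : W, c (Fin.cons w (f ∘ Fin.succ))) = c (Fin.cons (f 0) (f ∘ Fin.succ)) := by
    refine Finset.sum_eq_single (f 0) ?_ ?_
    · intro w _ hwne
      by_contra h0
      obtain ⟨i', hi'⟩ : ∃ i', w = Cs i' := by
        have := hsupp _ h0 0
        simpa using this
      have hwmem : w ∈ Finset.univ.image f := by
        rw [hCfin]; simp only [Finset.mem_image]; exact ⟨i', Finset.mem_univ _, hi'.symm⟩
      simp only [Finset.mem_image] at hwmem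
      obtain ⟨i0, -, hi0⟩ := hwmem
      rcases Fin.eq_zero_or_eq_succ i0 with rfl | ⟨i2, rfl⟩
      · exact hwne hi0.symm
      · have hinjcons : Function.Injective (Fin.cons w (f ∘ Fin.succ) : Fin (d+1) → W) := by
          by_contra h; exact h0 (altZero hc h)
        have e1 : (Fin.cons w (f ∘ Fin.succ) : Fin (d+1) → W) 0 = w := rfl
        have e2 : (Fin.cons w (f ∘ Fin.succ) : Fin (d+1) → W) i2.succ = f i2.succ := by
          simp
        have := hinjcons (show (Fin.cons w (f ∘ Fin.succ) : Fin (d+1) → W) 0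
            = (Fin.cons w (f ∘ Fin.succ) : Fin (d+1) → W) i2.succ by rw [e1, e2, hi0])
        exact (Fin.succ_ne_zero i2) this.symm
    · intro h; exact absurd (Finset.mem_univ _) h
  rw [hsingle] at hb
  have hct : Fin.cons (f 0) (f ∘ Fin.succ) = f := by
    funext i; refine Fin.cases ?_ ?_ i <;> simp
  rw [hct] at hb
  exact hne hb

end Aux3
section Aux4

variable {W : Type*}

lemma aux_all [DecidableEq W] {d : ℕ} (Cs : Fin (d + 1) → W) (hCs : Function.Injective Cs)
    (ib : Fin (d + 1)) (g : Fin (d + 2) → W) (hg : Function.Injective g)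
    (R : Fin (d + 2) → Prop)
    (hcent : ∀ i, R i → ∃ i', g i = Cs i')
    (qf : Fin (d + 2) → W) (hqP : ∀ i, R i → qf i = g i)
    (hqN : ∀ i, ¬ R i → qf i = Cs ib)
    (h2 : Function.Injective qf) : False := by
  classical
  set s : Finset (Fin (d + 2)) := Finset.univ.filter R with hs
  have hcompl : (Finset.univ.filter (fun i => ¬ R i)).card ≤ 1 := by
    refine Finset.card_le_one.mpr ?_
    intro a ha b hb
    simp only [Finset.mem_filter] at ha hb
    apply h2
    rw [hqN a ha.2, hqN b hb.2]
  have hcards : d + 1 ≤ s.card := by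
    have hfc := Finset.card_filter_add_card_filter_not
      (s := (Finset.univ : Finset (Fin (d + 2)))) (p := R)
    rw [Finset.card_univ, Fintype.card_fin, ← hs] at hfc
    omega
  have hD : s.image g ⊆ Finset.univ.image Cs := by
    intro w hw
    simp only [Finset.mem_image, Finset.mem_filter, hs] at hw ⊢
    obtain ⟨i, ⟨-, hR⟩, rfl⟩ := hw
    obtain ⟨i', hi'⟩ := hcent i hR
    exact ⟨i', Finset.mem_univ _, hi'.symm⟩
  have hcardD : (s.image g).card = s.card := Finset.card_image_of_injective _ hg
  have hnotall : ∃ k, ¬ R k := by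
    by_contra hall
    push_neg at hall
    have hseq : s = Finset.univ := by
      rw [hs]; exact Finset.filter_true_of_mem (fun i _ => hall i)
    have h1' : (s.image g).card ≤ (Finset.univ.image Cs).card := Finset.card_le_card hD
    rw [hcardD, hseq, Finset.card_univ, Fintype.card_fin,
        Finset.card_image_of_injective _ hCs, Finset.card_univ, Fintype.card_fin] at h1'
    omega
  obtain ⟨kstar, hkstar⟩ := hnotall
  have hDeq : s.image g = Finset.univ.image Cs := by
    apply Finset.eq_of_subset_of_card_le hD
    rw [Finset.card_image_of_injective _ hCs, Finset.card_univ, Fintype.card_fin, hcardD]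
    exact hcards
  have hbmem : Cs ib ∈ s.image g := by
    rw [hDeq]; exact Finset.mem_image_of_mem _ (Finset.mem_univ _)
  simp only [Finset.mem_image, Finset.mem_filter, hs] at hbmem
  obtain ⟨k0, ⟨-, hRk0⟩, hk0⟩ := hbmem
  have hkk : kstar = k0 := h2 (by rw [hqN _ hkstar, hqP _ hRk0, hk0])
  exact hkstar (hkk ▸ hRk0)

lemma no_double [DecidableEq W] {d : ℕ} (Cs : Fin (d + 1) → W) (hCs : Function.Injective Cs)
    (P Q : W → Prop)
    (hcent : ∀ w, P w → Q w → ∃ i, w = Cs i)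
    (ia ib : Fin (d + 1)) (hab : ia ≠ ib)
    (g : Fin (d + 2) → W)
    (qf1 : Fin (d + 2) → W) (hq1P : ∀ i, P (g i) → qf1 i = g i)
    (hq1N : ∀ i, ¬ P (g i) → qf1 i = Cs ia)
    (qf2 : Fin (d + 2) → W) (hq2P : ∀ i, Q (g i) → qf2 i = g i)
    (hq2N : ∀ i, ¬ Q (g i) → qf2 i = Cs ib)
    (h1 : Function.Injective qf1)
    (h2 : Function.Injective qf2) : False := by
  classical
  have hg : Function.Injective g := by
    intro a b hab2
    by_cases hP : P (g a)
    · have hPb : P (g b) := by rw [← hab2]; exact hP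
      apply h1
      rw [hq1P a hP, hq1P b hPb, hab2]
    · have hPb : ¬ P (g b) := by rw [← hab2]; exact hP
      apply h1
      rw [hq1N a hP, hq1N b hPb]
  by_cases hallP : ∀ i, P (g i)
  · exact aux_all Cs hCs ib g hg (fun i => Q (g i))
      (fun i hQ => (hcent _ (hallP i) hQ).imp (fun i' h => h)) qf2 hq2P hq2N h2
  by_cases hallQ : ∀ i, Q (g i)
  · exact aux_all Cs hCs ia g hg (fun i => P (g i))
      (fun i hP => (hcent _ hP (hallQ i)).imp (fun i' h => h)) qf1 hq1P hq1N h1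
  push_neg at hallP hallQ
  obtain ⟨istar, histar⟩ := hallP
  obtain ⟨kstar, hkstar⟩ := hallQ
  set s : Finset (Fin (d + 2)) := Finset.univ.filter (fun i => P (g i) ∧ Q (g i)) with hs
  have hsP : (Finset.univ.filter (fun i => ¬ P (g i))).card ≤ 1 := by
    refine Finset.card_le_one.mpr ?_
    intro a ha b hb
    simp only [Finset.mem_filter] at ha hb
    apply h1
    rw [hq1N a ha.2, hq1N b hb.2]
  have hsQ : (Finset.univ.filter (fun i => ¬ Q (g i))).card ≤ 1 := by
    refine Finset.card_le_one.mpr ?_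
    intro a ha b hb
    simp only [Finset.mem_filter] at ha hb
    apply h2
    rw [hq2N a ha.2, hq2N b hb.2]
  have hcards : d ≤ s.card := by
    have hsub : (Finset.univ : Finset (Fin (d + 2))) ⊆
        s ∪ Finset.univ.filter (fun i => ¬ P (g i)) ∪ Finset.univ.filter (fun i => ¬ Q (g i)) := by
      intro i _
      by_cases hP : P (g i) <;> by_cases hQ : Q (g i) <;>
        simp [hs, hP, hQ, Finset.mem_union, Finset.mem_filter]
    have hle := Finset.card_le_card hsub
    have hu1 := Finset.card_union_le (s ∪ Finset.univ.filter (fun i => ¬ P (g i)))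
      (Finset.univ.filter (fun i => ¬ Q (g i)))
    have hu2 := Finset.card_union_le s (Finset.univ.filter (fun i => ¬ P (g i)))
    rw [Finset.card_univ, Fintype.card_fin] at hle
    omega
  have hD : s.image g ⊆ Finset.univ.image Cs := by
    intro w hw
    simp only [Finset.mem_image, Finset.mem_filter, hs] at hw ⊢
    obtain ⟨i, ⟨-, hP, hQ⟩, rfl⟩ := hw
    obtain ⟨i', hi'⟩ := hcent _ hP hQ
    exact ⟨i', Finset.mem_univ _, hi'.symm⟩
  have hor : Cs ia ∈ s.image g ∨ Cs ib ∈ s.image g := by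
    by_contra hcon
    push_neg at hcon
    have hd1 : 1 ≤ d := by
      rcases Nat.eq_zero_or_pos d with h0 | h
      · subst h0
        have := ia.isLt
        have := ib.isLt
        exact absurd (Fin.ext (by omega)) hab
      · exact h
    have hbmem : Cs ib ∈ (Finset.univ.image Cs).erase (Cs ia) := by
      refine Finset.mem_erase.mpr ⟨fun h => hab (hCs h).symm, Finset.mem_image_of_mem _ (Finset.mem_univ _)⟩
    have hsub2 : s.image g ⊆ ((Finset.univ.image Cs).erase (Cs ia)).erase (Cs ib) := by
      intro w hw
      refine Finset.mem_erase.mpr ⟨?_, Finset.mem_erase.mpr ⟨?_, hD hw⟩⟩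
      · rintro rfl; exact hcon.2 hw
      · rintro rfl; exact hcon.1 hw
    have hc2 := Finset.card_le_card hsub2
    rw [Finset.card_erase_of_mem hbmem,
        Finset.card_erase_of_mem (Finset.mem_image_of_mem _ (Finset.mem_univ _)),
        Finset.card_image_of_injective _ hCs, Finset.card_univ, Fintype.card_fin,
        Finset.card_image_of_injective _ hg] at hc2
    omega
  rcases hor with hmem | hmem
  · simp only [Finset.mem_image, Finset.mem_filter, hs] at hmem
    obtain ⟨i0, ⟨-, hPi0, -⟩, hi0⟩ := hmem
    have hii : istar = i0 := h1 (by rw [hq1N _ histar, hq1P _ hPi0, hi0])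
    exact histar (hii ▸ hPi0)
  · simp only [Finset.mem_image, Finset.mem_filter, hs] at hmem
    obtain ⟨k0, ⟨-, -, hQk0⟩, hk0⟩ := hmem
    have hkk : kstar = k0 := h2 (by rw [hq2N _ hkstar, hq2P _ hQk0, hk0])
    exact hkstar (hkk ▸ hQk0)

end Aux4
/-- In any optimal integral decomposition of `K # K'`, every `(d+1)`-simplex with
nonzero coefficient is entirely on the vertices of `K` (central vertices included),
entirely on the vertices of `K'` (central vertices included), or entirely on one
side except for exactly one non-central vertex of the other side. -/
theorem stmt12 {V V' W : Type*} [Fintype V] [DecidableEq V]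
    [Fintype V'] [DecidableEq V'] [Fintype W] [DecidableEq W] (d : ℕ)
    (K : (Fin (d + 1) → V) → ℤ) (K' : (Fin (d + 1) → V') → ℤ)
    (hK : IsAdmissible d K) (hK' : IsAdmissible d K')
    (vF : Fin (d + 1) → V) (hvF : Function.Injective vF) (hFfacet : K vF = 1)
    (vF' : Fin (d + 1) → V') (hvF' : Function.Injective vF') (hFfacet' : K' vF' = 1)
    (j : V → W) (j' : V' → W) (hj : Function.Injective j) (hj' : Function.Injective j')
    (hcover : ∀ w : W, (∃ v, j v = w) ∨ (∃ v', j' v' = w))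
    (hmeet : ∀ (v : V) (v' : V'), j v = j' v' → ∃ i, v = vF i)
    (ρ : Equiv.Perm (Fin (d + 1))) (hρ : Equiv.Perm.sign ρ = -1)
    (hglue : ∀ i, j (vF i) = j' (vF' (ρ i)))
    (hadm : IsAdmissible d (connSum K K' vF vF' j j'))
    (α : (Fin (d + 2) → W) → ℤ) (hα : IsAltChain (d + 1) α)
    (hbdry : ∀ g, bdry α g = connSum K K' vF vF' j j' g)
    (hopt : normZ α = VZ d (connSum K K' vF vF' j j')) :
    ∀ t : Fin (d + 2) → W, α t ≠ 0 →
      (∀ i, ∃ v, t i = j v) ∨ (∀ i, ∃ v', t i = j' v') ∨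
      (∃! i, ¬ ∃ v, t i = j v) ∨ (∃! i, ¬ ∃ v', t i = j' v') := by
  classical
  intro t ht
  by_contra hcon
  push_neg at hcon
  obtain ⟨hA, hB, hC, hD⟩ := hcon
  -- extract two indices not on the K side
  obtain ⟨i₁, hi₁⟩ := hA
  have hi₁' : ¬ ∃ v, t i₁ = j v := by push_neg; exact hi₁
  obtain ⟨i₂, hi₂, hi₂₁⟩ : ∃ i₂, (∀ v, t i₂ ≠ j v) ∧ i₂ ≠ i₁ := by
    by_contra h
    push_neg at h
    exact hC ⟨i₁, hi₁, h⟩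
  have hi₂' : ¬ ∃ v, t i₂ = j v := by push_neg; exact hi₂
  obtain ⟨k₁, hk₁⟩ := hB
  have hk₁' : ¬ ∃ v', t k₁ = j' v' := by push_neg; exact hk₁
  obtain ⟨k₂, hk₂, hk₂₁⟩ : ∃ k₂, (∀ v', t k₂ ≠ j' v') ∧ k₂ ≠ k₁ := by
    by_contra h
    push_neg at h
    exact hD ⟨k₁, hk₁, h⟩
  have hk₂' : ¬ ∃ v', t k₂ = j' v' := by push_neg; exact hk₂
  -- indices not on the K' side are on the K side
  have hPk : ∀ k : Fin (d + 2), (¬ ∃ v', t k = j' v') → ∃ v, t k = j v := by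
    intro k hk
    rcases hcover (t k) with ⟨v, hv⟩ | ⟨v', hv'⟩
    · exact ⟨v, hv.symm⟩
    · exact absurd ⟨v', hv'.symm⟩ hk
  have hne1 : i₁ ≠ k₁ := fun h => hi₁' (h ▸ hPk k₁ hk₁')
  have hne2 : i₁ ≠ k₂ := fun h => hi₁' (h ▸ hPk k₂ hk₂')
  have hne3 : i₂ ≠ k₁ := fun h => hi₂' (h ▸ hPk k₁ hk₁')
  have hne4 : i₂ ≠ k₂ := fun h => hi₂' (h ▸ hPk k₂ hk₂')
  -- d ≥ 2
  have hd2 : 2 ≤ d := by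
    have hsub : ({i₁, i₂, k₁, k₂} : Finset (Fin (d + 2))).card ≤ d + 2 := by
      simpa using Finset.card_le_univ ({i₁, i₂, k₁, k₂} : Finset (Fin (d + 2)))
    have hc : ({i₁, i₂, k₁, k₂} : Finset (Fin (d + 2))).card = 4 := by
      rw [Finset.card_insert_of_notMem (by simp [hi₂₁.symm, hne1, hne2]),
          Finset.card_insert_of_notMem (by simp [hne3, hne4]),
          Finset.card_pair hk₂₁.symm]
    omega
  -- setup
  set Kh : (Fin (d + 1) → W) → ℤ := connSum K K' vF vF' j j' with hKh
  have hd1 : (1 : ℕ) < d + 1 := by omega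
  let ia : Fin (d + 1) := ⟨0, by omega⟩
  let ib : Fin (d + 1) := ⟨1, hd1⟩
  have hab : ia ≠ ib := by
    intro h
    have := congrArg Fin.val h
    simp [ia, ib] at this
  let P : W → Prop := fun w => ∃ v, j v = w
  let Q : W → Prop := fun w => ∃ v', j' v' = w
  let Cs : Fin (d + 1) → W := fun i => j (vF i)
  have hCs : Function.Injective Cs := fun a b h => hvF (hj h)
  let q : W → W := fun w => if P w then w else Cs ia
  let q' : W → W := fun w => if Q w then w else Cs ib
  have hqP : ∀ w, P w → q w = w := fun w h => if_pos h
  have hqN : ∀ w, ¬ P w → q w = Cs ia := fun w h => if_neg h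
  have hq'P : ∀ w, Q w → q' w = w := fun w h => if_pos h
  have hq'N : ∀ w, ¬ Q w → q' w = Cs ib := fun w h => if_neg h
  have hcent : ∀ w, P w → Q w → ∃ i, w = Cs i := by
    rintro w ⟨v, rfl⟩ ⟨v', hv'⟩
    obtain ⟨i, hi⟩ := hmeet v v' hv'.symm
    exact ⟨i, by rw [hi]⟩
  let β : (Fin (d + 2) → W) → ℤ := fun f => pushChain q α f + pushChain q' α f
  have hβalt : IsAltChain (d + 1) β := by
    intro σ f
    have h1 := pushChain_alt q hα σ f
    have h2 := pushChain_alt q' hα σ f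
    simp only [β, h1, h2, smul_add]
  -- boundary of β is Kh
  have hKh_decomp : ∀ f, Kh f = pushChain j K f + pushChain j' K' f := fun f =>
    connSum_decomp K K' vF vF' j j' ρ hρ hglue f
  have hqj : q ∘ j = j := by
    funext v; exact hqP (j v) ⟨v, rfl⟩
  have hq'j' : q' ∘ j' = j' := by
    funext v'; exact hq'P (j' v') ⟨v', rfl⟩
  have hzero1 : ∀ f, pushChain (q ∘ j') K' f = 0 := by
    intro f
    refine cycle_small _ (pushChain_alt _ hK'.chain) Cs hCs ?_ ?_ f
    · intro f2 hf2 i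
      have hex : ∃ g2 : Fin (d + 1) → V', (q ∘ j') ∘ g2 = f2 := by
        by_contra hno
        push_neg at hno
        apply hf2
        unfold pushChain
        exact Finset.sum_eq_zero (fun g2 _ => if_neg (hno g2))
      obtain ⟨g2, hg2⟩ := hex
      have hfi : f2 i = q (j' (g2 i)) := (congrFun hg2 i).symm
      rw [hfi]
      by_cases hP : P (j' (g2 i))
      · obtain ⟨v, hv⟩ := hP
        obtain ⟨i', hi'⟩ := hmeet v (g2 i) hv
        refine ⟨i', ?_⟩
        rw [hqP _ ⟨v, hv⟩, ← hv, hi']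
      · exact ⟨ia, hqN _ hP⟩
    · intro g
      rw [bdry_pushChain]
      have hz : bdry K' = (fun _ => (0 : ℤ)) := funext hK'.closed
      rw [hz, pushChain_zeroc]
  have hzero2 : ∀ f, pushChain (q' ∘ j) K f = 0 := by
    intro f
    refine cycle_small _ (pushChain_alt _ hK.chain) Cs hCs ?_ ?_ f
    · intro f2 hf2 i
      have hex : ∃ g2 : Fin (d + 1) → V, (q' ∘ j) ∘ g2 = f2 := by
        by_contra hno
        push_neg at hno
        apply hf2
        unfold pushChain
        exact Finset.sum_eq_zero (fun g2 _ => if_neg (hno g2))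
      obtain ⟨g2, hg2⟩ := hex
      have hfi : f2 i = q' (j (g2 i)) := (congrFun hg2 i).symm
      rw [hfi]
      by_cases hQ : Q (j (g2 i))
      · obtain ⟨v', hv'⟩ := hQ
        obtain ⟨i', hi'⟩ := hmeet (g2 i) v' hv'.symm
        refine ⟨i', ?_⟩
        rw [hq'P _ ⟨v', hv'⟩, hi']
      · exact ⟨ib, hq'N _ hQ⟩
    · intro g
      rw [bdry_pushChain]
      have hz : bdry K = (fun _ => (0 : ℤ)) := funext hK.closed
      rw [hz, pushChain_zeroc]
  have hbdryβ : ∀ g, bdry β g = Kh g := by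
    intro g
    have hsum : bdry β g = bdry (pushChain q α) g + bdry (pushChain q' α) g := by
      unfold bdry
      rw [← Finset.sum_add_distrib]
    rw [hsum, bdry_pushChain, bdry_pushChain]
    have hba : bdry α = Kh := funext hbdry
    rw [hba]
    have e1 : pushChain q Kh g = pushChain j K g := by
      have hkd : Kh = fun f => pushChain j K f + pushChain j' K' f := funext hKh_decomp
      rw [hkd, pushChain_addc, pushChain_pushChain, pushChain_pushChain, hqj,
        hzero1 g, add_zero]
    have e2 : pushChain q' Kh g = pushChain j' K' g := by
      have hkd : Kh = fun f => pushChain j K f + pushChain j' K' f := funext hKh_decomp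
      rw [hkd, pushChain_addc, pushChain_pushChain, pushChain_pushChain, hq'j',
        hzero2 g, zero_add]
    rw [e1, e2, hKh_decomp g]
  -- norm estimates
  have habs_t : (0 : ℝ) < |((α t : ℤ) : ℝ)| := by
    rw [abs_pos]
    exact_mod_cast ht
  have hnP1 : ¬ P (t i₁) := by rintro ⟨v, hv⟩; exact hi₁ v hv.symm
  have hnP2 : ¬ P (t i₂) := by rintro ⟨v, hv⟩; exact hi₂ v hv.symm
  have hnQ1 : ¬ Q (t k₁) := by rintro ⟨v', hv'⟩; exact hk₁ v' hv'.symm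
  have hnQ2 : ¬ Q (t k₂) := by rintro ⟨v', hv'⟩; exact hk₂ v' hv'.symm
  have hkey : ∀ g : Fin (d + 2) → W,
      (if Function.Injective (q ∘ g) then |((α g : ℤ) : ℝ)| else 0)
        + (if Function.Injective (q' ∘ g) then |((α g : ℤ) : ℝ)| else 0)
        ≤ (if g = t then 0 else |((α g : ℤ) : ℝ)|) := by
    intro g
    by_cases hgt : g = t
    · subst hgt
      rw [if_pos rfl]
      have hni1 : ¬ Function.Injective (q ∘ g) := by
        intro hin
        have h1 : (q ∘ g) i₁ = Cs ia := hqN _ hnP1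
        have h2 : (q ∘ g) i₂ = Cs ia := hqN _ hnP2
        exact hi₂₁ (hin (h2.trans h1.symm))
      have hni2 : ¬ Function.Injective (q' ∘ g) := by
        intro hin
        have h1 : (q' ∘ g) k₁ = Cs ib := hq'N _ hnQ1
        have h2 : (q' ∘ g) k₂ = Cs ib := hq'N _ hnQ2
        exact hk₂₁ (hin (h2.trans h1.symm))
      rw [if_neg hni1, if_neg hni2]
      norm_num
    · rw [if_neg hgt]
      by_cases h1 : Function.Injective (q ∘ g)
      · by_cases h2 : Function.Injective (q' ∘ g)
        · exact absurd (no_double Cs hCs P Q hcent ia ib hab g (q ∘ g)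
            (fun i h => hqP _ h) (fun i h => hqN _ h) (q' ∘ g)
            (fun i h => hq'P _ h) (fun i h => hq'N _ h) h1 h2) (fun h => h)
        · rw [if_pos h1, if_neg h2, add_zero]
      · rw [if_neg h1, zero_add]
        split_ifs
        · exact le_rfl
        · positivity
  have hpush_bound : ∀ r : W → W,
      (∑ f : Fin (d + 2) → W, |((pushChain r α f : ℤ) : ℝ)|)
        ≤ ∑ g : Fin (d + 2) → W,
            (if Function.Injective (r ∘ g) then |((α g : ℤ) : ℝ)| else 0) := by
    intro r
    have step1 : ∀ f : Fin (d + 2) → W, |((pushChain r α f : ℤ) : ℝ)|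
        ≤ ∑ g : Fin (d + 2) → W,
            (if r ∘ g = f ∧ Function.Injective (r ∘ g) then |((α g : ℤ) : ℝ)| else 0) := by
      intro f
      by_cases hf : Function.Injective f
      · have hc : ((pushChain r α f : ℤ) : ℝ)
            = ∑ g : Fin (d + 2) → W, (if r ∘ g = f then ((α g : ℤ) : ℝ) else 0) := by
          unfold pushChain
          rw [Int.cast_sum]
          refine Finset.sum_congr rfl fun g _ => ?_
          split_ifs <;> simp
        rw [hc]
        refine (Finset.abs_sum_le_sum_abs _ _).trans ?_
        refine Finset.sum_le_sum fun g _ => ?_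
        by_cases hrg : r ∘ g = f
        · rw [if_pos hrg, if_pos ⟨hrg, by rw [hrg]; exact hf⟩]
        · rw [if_neg hrg, if_neg (fun hh => hrg hh.1)]
          simp
      · have h0 : pushChain r α f = 0 := altZero (pushChain_alt r hα) hf
        rw [h0]
        simp only [Int.cast_zero, abs_zero]
        refine Finset.sum_nonneg fun g _ => ?_
        split_ifs
        · positivity
        · exact le_rfl
    refine (Finset.sum_le_sum fun f _ => step1 f).trans (le_of_eq ?_)
    rw [Finset.sum_comm]
    refine Finset.sum_congr rfl fun g _ => ?_
    calc ∑ f : Fin (d + 2) → W,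
          (if r ∘ g = f ∧ Function.Injective (r ∘ g) then |((α g : ℤ) : ℝ)| else 0)
        = ∑ f : Fin (d + 2) → W, (if r ∘ g = f then
            (if Function.Injective (r ∘ g) then |((α g : ℤ) : ℝ)| else 0) else 0) := by
          refine Finset.sum_congr rfl fun f _ => ?_
          rw [ite_and]
      _ = (if Function.Injective (r ∘ g) then |((α g : ℤ) : ℝ)| else 0) := by
          rw [Finset.sum_ite_eq]
          simp
  have hsum1 : (∑ f : Fin (d + 2) → W, |((β f : ℤ) : ℝ)|)
      ≤ (∑ g : Fin (d + 2) → W, |((α g : ℤ) : ℝ)|) - |((α t : ℤ) : ℝ)| := by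
    have s1 : ∀ f, |((β f : ℤ) : ℝ)|
        ≤ |((pushChain q α f : ℤ) : ℝ)| + |((pushChain q' α f : ℤ) : ℝ)| := by
      intro f
      have hb : ((β f : ℤ) : ℝ) = ((pushChain q α f : ℤ) : ℝ) + ((pushChain q' α f : ℤ) : ℝ) := by
        push_cast [β]
        ring
      rw [hb]
      exact abs_add_le _ _
    calc (∑ f : Fin (d + 2) → W, |((β f : ℤ) : ℝ)|)
        ≤ ∑ f : Fin (d + 2) → W,
            (|((pushChain q α f : ℤ) : ℝ)| + |((pushChain q' α f : ℤ) : ℝ)|) :=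
          Finset.sum_le_sum fun f _ => s1 f
      _ = (∑ f : Fin (d + 2) → W, |((pushChain q α f : ℤ) : ℝ)|)
            + (∑ f : Fin (d + 2) → W, |((pushChain q' α f : ℤ) : ℝ)|) :=
          Finset.sum_add_distrib
      _ ≤ (∑ g : Fin (d + 2) → W, (if Function.Injective (q ∘ g) then |((α g : ℤ) : ℝ)| else 0))
            + (∑ g : Fin (d + 2) → W, (if Function.Injective (q' ∘ g) then |((α g : ℤ) : ℝ)| else 0)) :=
          add_le_add (hpush_bound q) (hpush_bound q')
      _ = ∑ g : Fin (d + 2) → W, ((if Function.Injective (q ∘ g) then |((α g : ℤ) : ℝ)| else 0)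
            + (if Function.Injective (q' ∘ g) then |((α g : ℤ) : ℝ)| else 0)) :=
          Finset.sum_add_distrib.symm
      _ ≤ ∑ g : Fin (d + 2) → W, (if g = t then 0 else |((α g : ℤ) : ℝ)|) :=
          Finset.sum_le_sum fun g _ => hkey g
      _ = (∑ g : Fin (d + 2) → W, |((α g : ℤ) : ℝ)|) - |((α t : ℤ) : ℝ)| := by
          have hrw : ∀ g : Fin (d + 2) → W, (if g = t then (0 : ℝ) else |((α g : ℤ) : ℝ)|)
              = |((α g : ℤ) : ℝ)| - (if g = t then |((α t : ℤ) : ℝ)| else 0) := by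
            intro g
            split_ifs with h
            · rw [h]; ring
            · ring
          rw [Finset.sum_congr rfl fun g _ => hrw g, Finset.sum_sub_distrib]
          congr 1
          rw [Finset.sum_ite_eq']
          simp
  have hltβ : normZ β < normZ α := by
    unfold normZ
    have hfact : (0 : ℝ) < ((d + 1 + 1).factorial : ℝ) := by positivity
    rw [div_lt_div_iff_of_pos_right hfact]
    linarith
  have hVZ : VZ d Kh ≤ normZ β := by
    unfold VZ
    refine csInf_le ?_ ?_
    · refine ⟨0, ?_⟩
      rintro x ⟨α2, -, -, rfl⟩
      unfold normZ
      positivity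
    · exact ⟨β, hβalt, hbdryβ, rfl⟩
  rw [← hopt] at hVZ
  exact absurd (lt_of_le_of_lt hVZ hltβ) (lt_irrefl _)
end

section
/- (Triangular bipyramid example) Let K be the admissible 2-complex on the five-element vertex set {A, B, C, D, E} whose facets are the six oriented 2-simplices [A,B,D], [A,E,B], [A,D,E], [B,C,D], [C,E,D], [C,B,E] (the boundary of a triangular bipyramid with apexes A and C over the triangle B, D, E, oriented outward). Then V_ℤ(K) = V_ℚ(K) = 2. -/
/-- The boundary of the triangular bipyramid with apexes `A = 0`, `C = 2` over the
triangle `B = 1`, `D = 3`, `E = 4`, oriented outward: facets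
`[A,B,D], [A,E,B], [A,D,E], [B,C,D], [C,E,D], [C,B,E]`. -/
def bipyramid : (Fin 3 → Fin 5) → ℤ := fun f =>
  simplexChain ![0, 1, 3] f + simplexChain ![0, 4, 1] f + simplexChain ![0, 3, 4] f +
    simplexChain ![1, 2, 3] f + simplexChain ![2, 4, 3] f + simplexChain ![2, 1, 4] f

lemma simplexChain_alt {V : Type*} [DecidableEq V] {n : ℕ} (s : Fin (n + 1) → V) :
    IsAltChain n (simplexChain s) := by
  intro σ f
  unfold simplexChain
  rw [← Equiv.sum_comp (Equiv.mulRight σ⁻¹)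
    (fun τ => if f = s ∘ τ then (Equiv.Perm.sign τ : ℤ) else 0)]
  rw [smul_eq_mul, Finset.mul_sum]
  refine Finset.sum_congr rfl fun τ _ => ?_
  have h1 : f = s ∘ ⇑((Equiv.mulRight σ⁻¹) τ) ↔ f ∘ σ = s ∘ τ := by
    simp only [Equiv.coe_mulRight, Equiv.Perm.coe_mul]
    constructor
    · intro h; funext x
      have := congrFun h (σ x); simpa using this
    · intro h; funext x
      have := congrFun h (σ⁻¹ x)
      simpa [Function.comp] using this
  have hs : (Equiv.Perm.sign σ : ℤ) * (Equiv.Perm.sign σ : ℤ) = 1 := by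
    rcases Int.units_eq_one_or (Equiv.Perm.sign σ) with h | h <;> simp [h]
  have h2 : ((Equiv.Perm.sign ((Equiv.mulRight σ⁻¹) τ) : ℤ))
      = (Equiv.Perm.sign τ : ℤ) * (Equiv.Perm.sign σ : ℤ) := by
    simp only [Equiv.coe_mulRight]
    rw [map_mul]; push_cast; simp [Equiv.Perm.sign_inv]
  by_cases hc : f ∘ ⇑σ = s ∘ ⇑τ
  · rw [if_pos hc, if_pos (h1.mpr hc), h2, mul_comm (Equiv.Perm.sign τ : ℤ), ← mul_assoc, hs,
      one_mul]
  · rw [if_neg hc, if_neg (fun h => hc (h1.mp h)), mul_zero]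

lemma IsAltChain.add {V : Type*} {n : ℕ} {c d : (Fin (n + 1) → V) → ℤ}
    (hc : IsAltChain n c) (hd : IsAltChain n d) : IsAltChain n (fun f => c f + d f) := by
  intro σ f
  simp only [Function.comp]
  have h1 := hc σ f
  have h2 := hd σ f
  rw [h1, h2, smul_add]

lemma IsAltChain.ratCast {V : Type*} {n : ℕ} {c : (Fin (n + 1) → V) → ℤ}
    (hc : IsAltChain n c) : IsAltChain n (fun f => (c f : ℚ)) := by
  intro σ f
  have := hc σ f
  simp only [Function.comp] at this ⊢
  rw [this]
  push_cast
  simp [zsmul_eq_mul]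

lemma alt_eq_zero_of_not_injective {V : Type*} {n : ℕ} {c : (Fin (n + 1) → V) → ℚ}
    (hc : IsAltChain n c) {f : Fin (n + 1) → V} (hf : ¬ Function.Injective f) : c f = 0 := by
  simp only [Function.Injective, not_forall] at hf
  obtain ⟨a, b, hab, hne⟩ := hf
  have hσ := hc (Equiv.swap a b) f
  have hff : f ∘ (Equiv.swap a b) = f := by
    funext x
    rcases eq_or_ne x a with rfl | hxa
    · simp [Equiv.swap_apply_left, hab]
    rcases eq_or_ne x b with rfl | hxb
    · simp [Equiv.swap_apply_right, hab]
    · simp [Equiv.swap_apply_of_ne_of_ne hxa hxb]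
  rw [hff, Equiv.Perm.sign_swap hne, Units.val_neg, Units.val_one, neg_smul, one_smul] at hσ
  linarith

lemma alt_insertNth {V : Type*} {n : ℕ} {c : (Fin (n + 1 + 1) → V) → ℚ}
    (hc : IsAltChain (n + 1) c) (i : Fin (n + 2)) (v : V) (g : Fin (n + 1) → V) :
    c (Fin.insertNth i v g) = (-1 : ℚ) ^ (i : ℕ) * c (Fin.cons v g) := by
  have hkey : Fin.insertNth i v g = (Fin.cons v g) ∘ (Fin.cycleRange i) := by
    funext j
    rcases eq_or_ne j i with rfl | hj
    · simp
    · obtain ⟨k, rfl⟩ := Fin.exists_succAbove_eq hj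
      simp
  have := hc (Fin.cycleRange i) (Fin.cons v g)
  rw [hkey, this, Fin.sign_cycleRange]
  push_cast
  simp [zsmul_eq_mul]

def fluxZ (f : Fin 4 → Fin 5) : ℤ :=
  ∑ i : Fin 4, (-1 : ℤ) ^ (i : ℕ) * bipyramid (f ∘ i.succAbove)

set_option maxRecDepth 100000 in
set_option maxHeartbeats 4000000 in
lemma flux_bound : ∀ f : Fin 4 → Fin 5, Function.Injective f → (fluxZ f ≤ 3 ∧ -3 ≤ fluxZ f) := by
  decide

set_option maxRecDepth 100000 in
set_option maxHeartbeats 4000000 in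
lemma Ksq : (∑ g : Fin 3 → Fin 5, bipyramid g * bipyramid g) = 36 := by decide

lemma key_sum (α : (Fin 4 → Fin 5) → ℚ) (hα : IsAltChain 3 α)
    (hb : ∀ g, bdry α g = (bipyramid g : ℚ)) (i : Fin 4) :
    (∑ f : Fin 4 → Fin 5, α f * ((-1 : ℚ) ^ (i : ℕ) * (bipyramid (f ∘ i.succAbove) : ℚ)))
      = ∑ g : Fin 3 → Fin 5, (bipyramid g : ℚ) * (bipyramid g : ℚ) := by
  rw [← Equiv.sum_comp (Fin.insertNthEquiv (fun _ => Fin 5) i)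
    (fun f => α f * ((-1 : ℚ) ^ (i : ℕ) * (bipyramid (f ∘ i.succAbove) : ℚ)))]
  have h1 : ∀ (v : Fin 5) (g : Fin 3 → Fin 5),
      (Fin.insertNth i v g) ∘ i.succAbove = g := by
    intro v g; funext k; simp [Function.comp]
  have hsq : ((-1 : ℚ) ^ (i : ℕ)) * ((-1 : ℚ) ^ (i : ℕ)) = 1 := by
    rw [← pow_add]; exact (neg_one_pow_eq_one_iff_even (by norm_num)).2 (Even.add_self _)
  have step : ∀ p : Fin 5 × (Fin 3 → Fin 5),
      (fun f => α f * ((-1 : ℚ) ^ (i : ℕ) * (bipyramid (f ∘ i.succAbove) : ℚ)))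
        ((Fin.insertNthEquiv (fun _ => Fin 5) i) p)
      = α (Fin.cons p.1 p.2) * (bipyramid p.2 : ℚ) := by
    rintro ⟨v, g⟩
    show α (Fin.insertNth i v g) * ((-1 : ℚ) ^ (i : ℕ)
        * (bipyramid ((Fin.insertNth i v g) ∘ i.succAbove) : ℚ)) = _
    rw [h1, alt_insertNth hα i v g]
    calc (-1 : ℚ) ^ (i : ℕ) * α (Fin.cons v g) * ((-1 : ℚ) ^ (i : ℕ) * (bipyramid g : ℚ))
        = ((-1 : ℚ) ^ (i : ℕ) * (-1 : ℚ) ^ (i : ℕ)) * (α (Fin.cons v g) * (bipyramid g : ℚ)) := by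
          ring
      _ = α (Fin.cons v g) * (bipyramid g : ℚ) := by rw [hsq, one_mul]
  rw [Finset.sum_congr rfl fun p _ => step p, Fintype.sum_prod_type, Finset.sum_comm]
  refine Finset.sum_congr rfl fun g _ => ?_
  dsimp only
  rw [← Finset.sum_mul]
  rw [show (∑ v : Fin 5, α (Fin.cons v g)) = bdry α g from rfl, hb g]

lemma lower_bound_Q (α : (Fin 4 → Fin 5) → ℚ) (hα : IsAltChain 3 α)
    (hb : ∀ g, bdry α g = (bipyramid g : ℚ)) :
    (48 : ℚ) ≤ ∑ f : Fin 4 → Fin 5, |α f| := by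
  have main : (∑ f : Fin 4 → Fin 5, α f * (fluxZ f : ℚ)) = 144 := by
    have e1 : ∀ f : Fin 4 → Fin 5, α f * (fluxZ f : ℚ)
        = ∑ i : Fin 4, α f * ((-1 : ℚ) ^ (i : ℕ) * (bipyramid (f ∘ i.succAbove) : ℚ)) := by
      intro f
      rw [← Finset.mul_sum]
      congr 1
      unfold fluxZ
      push_cast
      rfl
    rw [Finset.sum_congr rfl fun f _ => e1 f, Finset.sum_comm]
    rw [Finset.sum_congr rfl fun i _ => key_sum α hα hb i]
    have h36 : (∑ g : Fin 3 → Fin 5, (bipyramid g : ℚ) * (bipyramid g : ℚ)) = 36 := by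
      rw [show (36 : ℚ) = ((36 : ℤ) : ℚ) by norm_num, ← Ksq]
      push_cast
      rfl
    rw [Finset.sum_congr rfl fun (i : Fin 4) _ => h36]
    norm_num
  have hbound : ∀ f : Fin 4 → Fin 5, α f * (fluxZ f : ℚ) ≤ |α f| * 3 := by
    intro f
    by_cases hf : Function.Injective f
    · obtain ⟨h1, h2⟩ := flux_bound f hf
      calc α f * (fluxZ f : ℚ) ≤ |α f * (fluxZ f : ℚ)| := le_abs_self _
        _ = |α f| * |(fluxZ f : ℚ)| := abs_mul _ _
        _ ≤ |α f| * 3 := by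
            refine mul_le_mul_of_nonneg_left ?_ (abs_nonneg _)
            rw [abs_le]
            constructor <;> [exact_mod_cast h2; exact_mod_cast h1]
    · rw [alt_eq_zero_of_not_injective hα hf]
      simp [abs_nonneg]
  have h3 : (144 : ℚ) ≤ ∑ f : Fin 4 → Fin 5, |α f| * 3 := by
    rw [← main]; exact Finset.sum_le_sum fun f _ => hbound f
  rw [← Finset.sum_mul] at h3
  linarith

def alphaZ : (Fin 4 → Fin 5) → ℤ := fun f =>
  simplexChain ![1, 0, 3, 4] f + simplexChain ![2, 1, 3, 4] f

lemma alphaZ_alt : IsAltChain 3 alphaZ :=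
  (simplexChain_alt _).add (simplexChain_alt _)

set_option maxRecDepth 100000 in
set_option maxHeartbeats 8000000 in
lemma alphaZ_bdry : ∀ g : Fin 3 → Fin 5, bdry alphaZ g = bipyramid g := by decide

set_option maxRecDepth 100000 in
set_option maxHeartbeats 8000000 in
lemma alphaZ_abs : (∑ f : Fin 4 → Fin 5, |alphaZ f|) = 48 := by decide

lemma normZ_alphaZ : normZ alphaZ = 2 := by
  unfold normZ
  have h : (∑ f : Fin 4 → Fin 5, |(alphaZ f : ℝ)|)
      = ((∑ f : Fin 4 → Fin 5, |alphaZ f| : ℤ) : ℝ) := by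
    push_cast; rfl
  rw [h, alphaZ_abs]
  norm_num [Nat.factorial]

def alphaQ : (Fin 4 → Fin 5) → ℚ := fun f => (alphaZ f : ℚ)

lemma alphaQ_alt : IsAltChain 3 alphaQ := alphaZ_alt.ratCast

lemma alphaQ_bdry : ∀ g : Fin 3 → Fin 5, bdry alphaQ g = (bipyramid g : ℚ) := by
  intro g
  rw [← alphaZ_bdry g]
  unfold bdry alphaQ
  push_cast
  rfl

lemma normQ_alphaQ : normQ alphaQ = 2 := by
  unfold normQ
  have h : (∑ f : Fin 4 → Fin 5, |(alphaQ f : ℝ)|)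
      = ((∑ f : Fin 4 → Fin 5, |alphaZ f| : ℤ) : ℝ) := by
    unfold alphaQ; push_cast; rfl
  rw [h, alphaZ_abs]
  norm_num [Nat.factorial]

lemma normQ_ge (α : (Fin 4 → Fin 5) → ℚ) (hα : IsAltChain 3 α)
    (hb : ∀ g, bdry α g = (bipyramid g : ℚ)) : (2 : ℝ) ≤ normQ α := by
  have h48 := lower_bound_Q α hα hb
  unfold normQ
  have h : (∑ f : Fin 4 → Fin 5, |(α f : ℝ)|)
      = ((∑ f : Fin 4 → Fin 5, |α f| : ℚ) : ℝ) := by push_cast; rfl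
  rw [h]
  have h2 : (48 : ℝ) ≤ ((∑ f : Fin 4 → Fin 5, |α f| : ℚ) : ℝ) := by exact_mod_cast h48
  have h3 : (((3 + 1).factorial : ℕ) : ℝ) = 24 := by norm_num [Nat.factorial]
  rw [h3]
  linarith

lemma normZ_ge (α : (Fin 4 → Fin 5) → ℤ) (hα : IsAltChain 3 α)
    (hb : ∀ g, bdry α g = bipyramid g) : (2 : ℝ) ≤ normZ α := by
  have hQ : (2 : ℝ) ≤ normQ (fun f => (α f : ℚ)) := by
    refine normQ_ge _ hα.ratCast fun g => ?_
    rw [← hb g]; unfold bdry; push_cast; rfl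
  have : normQ (fun f => (α f : ℚ)) = normZ α := by
    unfold normQ normZ; push_cast; rfl
  linarith

/-- Triangular bipyramid example: `V_ℤ = V_ℚ = 2`. -/
theorem stmt15 : VZ 2 bipyramid = 2 ∧ VQ 2 bipyramid = 2 := by
  constructor
  · apply le_antisymm
    · apply csInf_le
      · exact ⟨2, fun x ⟨α, hα, hb, hx⟩ => hx ▸ normZ_ge α hα hb⟩
      · exact ⟨alphaZ, alphaZ_alt, alphaZ_bdry, normZ_alphaZ.symm⟩
    · refine le_csInf ⟨normZ alphaZ, alphaZ, alphaZ_alt, alphaZ_bdry, rfl⟩ ?_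
      rintro x ⟨α, hα, hb, rfl⟩
      exact normZ_ge α hα hb
  · apply le_antisymm
    · apply csInf_le
      · exact ⟨2, fun x ⟨α, hα, hb, hx⟩ => hx ▸ normQ_ge α hα hb⟩
      · exact ⟨alphaQ, alphaQ_alt, alphaQ_bdry, normQ_alphaQ.symm⟩
    · refine le_csInf ⟨normQ alphaQ, alphaQ, alphaQ_alt, alphaQ_bdry, rfl⟩ ?_
      rintro x ⟨α, hα, hb, rfl⟩
      exact normQ_ge α hα hb
end
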